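/- arXiv:2501.04599 — 3 statements merged into one kernel-verified Lean document; each statement's English description precedes it below -/
import Mathlib

section
/- Let V be the n × (L+1) Vandermonde matrix V_{k,ℓ} = x_k^ℓ (ℓ = 0, …, L, L ≥ n) with pairwise distinct x_k, and let W = P V for an invertible n×n matrix P. If Z_L and Z_H denote the submatrices of W obtained by deleting the last and first columns respectively, then Z_H Z_L^+ = P diag(x_1, …, x_n) P^{-1}, where Z_L^+ is the Moore–Penrose pseudoinverse; in particular the eigenvalues of Z_H Z_L^+ are exactly x_1, …, x_n. -/
/-!
Write `V` for the `n × L` matrix `(x_k^ℓ)_{ℓ < L}`. Then `Z_L = P V` and,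
since shifting the exponents by one multiplies row `k` by `x_k`, `Z_H = P diag(x) V`.
As `L ≥ n`, the first `n` columns of `V` form an invertible square Vandermonde matrix, so `V`,
and hence `Z_L`, has a right inverse; the Penrose condition `Z_L Z_L⁺ Z_L = Z_L` then forces
`Z_L Z_L⁺ = 1`, i.e. `V Z_L⁺ = P⁻¹`, and `Z_H Z_L⁺ = P diag(x) P⁻¹`.
-/

open Matrix

/-- `Zp` is a Moore–Penrose pseudoinverse of `Z` (the four Penrose conditions). -/
def IsMoorePenrose {α β : Type*} [Fintype α] [Fintype β] [DecidableEq α] [DecidableEq β]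
    (Z : Matrix α β ℂ) (Zp : Matrix β α ℂ) : Prop :=
  Z * Zp * Z = Z ∧ Zp * Z * Zp = Zp ∧ (Z * Zp)ᴴ = Z * Zp ∧ (Zp * Z)ᴴ = Zp * Z

namespace Matrix

variable {m k R : Type*} [Fintype m] [Fintype k] [DecidableEq m]

theorem exists_mul_eq_one_of_isUnit_submatrix [DecidableEq k] [Field R] (A : Matrix m k R)
    (f : m → k) (h : IsUnit (A.submatrix id f)) : ∃ B : Matrix k m R, A * B = 1 :=
  ⟨(1 : Matrix k k R).submatrix (Equiv.refl k) f * (A.submatrix id f)⁻¹, by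
    rw [← Matrix.mul_assoc, mul_submatrix_one]
    exact mul_nonsing_inv _ ((isUnit_iff_isUnit_det _).mp h)⟩

theorem mul_eq_one_of_mul_mul_self [Semiring R] {A : Matrix m k R} {B G : Matrix k m R}
    (hB : A * B = 1) (hG : A * G * A = A) : A * G = 1 :=
  calc A * G = A * G * (A * B) := by rw [hB, Matrix.mul_one]
    _ = A * B := by rw [← Matrix.mul_assoc, hG]
    _ = 1 := hB

theorem mul_mul_mul_eq_mul_mul_inv_of_mul_mul_self [CommRing R] {P D : Matrix m m R}
    {V : Matrix m k R} {G : Matrix k m R} (hP : IsUnit P) (hV : ∃ B : Matrix k m R, V * B = 1)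
    (hG : P * V * G * (P * V) = P * V) : P * D * V * G = P * D * P⁻¹ := by
  obtain ⟨B, hB⟩ := hV
  have hPV : P * V * (B * P⁻¹) = 1 := by
    rw [Matrix.mul_assoc, ← Matrix.mul_assoc V, hB, Matrix.one_mul,
      mul_nonsing_inv _ ((isUnit_iff_isUnit_det _).mp hP)]
  have hVG : V * G = P⁻¹ :=
    (inv_eq_right_inv (by rw [← Matrix.mul_assoc]; exact mul_eq_one_of_mul_mul_self hPV hG)).symm
  rw [Matrix.mul_assoc _ V, hVG]

theorem spectrum_conj_diagonal [Field R] {P : Matrix m m R} (hP : IsUnit P) (d : m → R) :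
    spectrum R (P * diagonal d * P⁻¹) = Set.range d := by
  rw [← hP.unit_spec, ← coe_units_inv, spectrum.units_conjugate, spectrum_diagonal]

end Matrix

section PowerMatrix

variable {ι R : Type*} [Fintype ι] [DecidableEq ι] {n L : ℕ}

theorem exists_pow_matrix_mul_eq_one [Field R] {x : Fin n → R} (hx : Function.Injective x)
    (hL : n ≤ L) :
    ∃ B : Matrix (Fin L) (Fin n) R, Matrix.of (fun k (ℓ : Fin L) => x k ^ (ℓ : ℕ)) * B = 1 :=
  exists_mul_eq_one_of_isUnit_submatrix _ (Fin.castLE hL)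
    ((isUnit_iff_isUnit_det (vandermonde x)).mpr
      (isUnit_iff_ne_zero.mpr (det_vandermonde_ne_zero_iff.mpr hx)))

theorem pow_matrix_submatrix_succ [CommSemiring R] (x : ι → R) :
    (Matrix.of fun k (ℓ : Fin (L + 1)) => x k ^ (ℓ : ℕ)).submatrix id Fin.succ =
      diagonal x *
        (Matrix.of fun k (ℓ : Fin (L + 1)) => x k ^ (ℓ : ℕ)).submatrix id Fin.castSucc := by
  ext k ℓ
  simp [diagonal_mul, pow_succ']

end PowerMatrix

/-- Let `V` be the `n × (L+1)` Vandermonde matrix `V_{k,ℓ} = x_k^ℓ` with `L ≥ n`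
and pairwise distinct `x_k`, and `W = P V` with `P` invertible.  If `Z_L` and
`Z_H` are `W` without its last and first columns respectively, then
`Z_H Z_L⁺ = P diag(x) P⁻¹`; in particular the spectrum of `Z_H Z_L⁺` is exactly
`{x_1, …, x_n}`. -/
theorem esprit_shift_identity (n L : ℕ) (hL : n ≤ L)
    (x : Fin n → ℂ) (hx : Function.Injective x)
    (P : Matrix (Fin n) (Fin n) ℂ) (hP : IsUnit P)
    (W : Matrix (Fin n) (Fin (L + 1)) ℂ)
    (hW : W = P * Matrix.of (fun (k : Fin n) (ℓ : Fin (L + 1)) => x k ^ (ℓ : ℕ)))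
    (ZL ZH : Matrix (Fin n) (Fin L) ℂ)
    (hZL : ∀ k ℓ, ZL k ℓ = W k ℓ.castSucc)
    (hZH : ∀ k ℓ, ZH k ℓ = W k ℓ.succ)
    (ZLp : Matrix (Fin L) (Fin n) ℂ) (hpinv : IsMoorePenrose ZL ZLp) :
    ZH * ZLp = P * Matrix.diagonal x * P⁻¹ ∧
    spectrum ℂ (ZH * ZLp) = Set.range x := by
  set V := Matrix.of fun (k : Fin n) (ℓ : Fin (L + 1)) => x k ^ (ℓ : ℕ)
  have hZL' : ZL = P * V.submatrix id Fin.castSucc := by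
    ext k ℓ; rw [hZL, hW]; rfl
  have hZH' : ZH = P * diagonal x * V.submatrix id Fin.castSucc := by
    ext k ℓ; rw [Matrix.mul_assoc, ← pow_matrix_submatrix_succ, hZH, hW]; rfl
  have hshift : ZH * ZLp = P * diagonal x * P⁻¹ := by
    rw [hZH']
    exact mul_mul_mul_eq_mul_mul_inv_of_mul_mul_self hP (exists_pow_matrix_mul_eq_one hx hL)
      (hZL' ▸ hpinv.1)
  exact ⟨hshift, hshift ▸ spectrum_conj_diagonal hP x⟩
end

section
/- The Stieltjes transform g(z) of the semicircle law with parameter σ satisfies the quadratic equation σ² g(z)² − z g(z) + 1 = 0 for all z outside the support. -/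
open MeasureTheory Set Real

/-- The semicircle law with parameter `σ`: density `(1/(2πσ²))√(4σ² - x²)`
on `[-2σ, 2σ]`. -/
noncomputable def semicircleLaw (σ : ℝ) : Measure ℝ :=
  (volume.restrict (Icc (-(2 * σ)) (2 * σ))).withDensity
    (fun x => ENNReal.ofReal ((2 * π * σ ^ 2)⁻¹ * Real.sqrt (4 * σ ^ 2 - x ^ 2)))

lemma sc_arg_aux (c : ℂ) (hc : c.im ≠ 0) :
    |Complex.arg (1 - c) - Complex.arg (-1 - c)| < π := by
  have h1 : (1 - c).im = -c.im := by simp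
  have h2 : (-1 - c).im = -c.im := by simp
  rcases lt_or_gt_of_ne hc with h | h
  · -- c.im < 0, both have positive imaginary part : args in (0, π)
    have k1 : 0 < (1 - c).im := by rw [h1]; linarith
    have k2 : 0 < (-1 - c).im := by rw [h2]; linarith
    have a1 : 0 ≤ Complex.arg (1 - c) := le_of_not_gt (by
      rw [Complex.arg_neg_iff]; linarith)
    have a2 : 0 ≤ Complex.arg (-1 - c) := le_of_not_gt (by
      rw [Complex.arg_neg_iff]; linarith)
    have b1 : Complex.arg (1 - c) < π :=
      lt_of_le_of_ne (Complex.arg_le_pi _) (fun hh => by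
        have := (Complex.arg_eq_pi_iff.mp hh).2; linarith)
    have b2 : Complex.arg (-1 - c) < π :=
      lt_of_le_of_ne (Complex.arg_le_pi _) (fun hh => by
        have := (Complex.arg_eq_pi_iff.mp hh).2; linarith)
    rw [abs_sub_lt_iff]; constructor <;> linarith
  · -- c.im > 0, both have negative imaginary part : args in (-π, 0)
    have k1 : (1 - c).im < 0 := by rw [h1]; linarith
    have k2 : (-1 - c).im < 0 := by rw [h2]; linarith
    have a1 : Complex.arg (1 - c) < 0 := Complex.arg_neg_iff.mpr k1
    have a2 : Complex.arg (-1 - c) < 0 := Complex.arg_neg_iff.mpr k2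
    have b1 : -π < Complex.arg (1 - c) := Complex.neg_pi_lt_arg _
    have b2 : -π < Complex.arg (-1 - c) := Complex.neg_pi_lt_arg _
    rw [abs_sub_lt_iff]; constructor <;> linarith


set_option maxHeartbeats 1000000 in
lemma sc_key (a : ℝ) (ha : 0 < a) (z : ℂ)
    (hz : ∀ x : ℝ, x ∈ Icc (-a) a → z ≠ (x : ℂ)) :
    ∃ v E : ℂ, v ^ 2 = (a : ℂ) ^ 2 - z ^ 2 ∧ E ^ 2 = -(π : ℂ) ^ 2 ∧
      ∫ x in (-a)..a, (Real.sqrt (a ^ 2 - x ^ 2) : ℂ) * (z - (x : ℂ))⁻¹ =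
        (π : ℂ) * z + v * E := by
  have hz0 : z ≠ 0 := by
    have := hz 0 ⟨by linarith, by linarith⟩; simpa using this
  have hza : z ≠ (a : ℂ) := hz a ⟨by linarith, le_refl a⟩
  have hza' : z ≠ -(a : ℂ) := by
    have := hz (-a) ⟨le_refl _, by linarith⟩; simpa using this
  have hvz : (a : ℂ) ^ 2 - z ^ 2 ≠ 0 := by
    intro h
    have : ((a : ℂ) - z) * ((a : ℂ) + z) = 0 := by linear_combination h
    rcases mul_eq_zero.mp this with h' | h'
    · exact hza (by linear_combination -h')
    · exact hza' (by linear_combination h')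
  set v : ℂ := Complex.exp (Complex.log ((a : ℂ) ^ 2 - z ^ 2) / 2) with hv
  have hv2 : v ^ 2 = (a : ℂ) ^ 2 - z ^ 2 := by
    rw [hv, sq, ← Complex.exp_add, add_halves, Complex.exp_log hvz]
  have hv0 : v ≠ 0 := Complex.exp_ne_zero _
  set tp : ℂ := ((a : ℂ) + v) / z with htp
  set tm : ℂ := ((a : ℂ) - v) / z with htm
  have hsum : tp + tm = 2 * a / z := by rw [htp, htm]; field_simp; ring
  have hprod : tp * tm = 1 := by
    rw [htp, htm]; field_simp; linear_combination -hv2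
  have hdiff : tp - tm = 2 * v / z := by rw [htp, htm]; field_simp; ring
  -- roots are not real
  have him : ∀ t : ℂ, z * t ^ 2 - 2 * a * t + z = 0 → t.im ≠ 0 := by
    intro t hroot him0
    set r : ℝ := t.re with hr
    have ht : t = (r : ℂ) := Complex.ext rfl him0
    have hden : (1 : ℝ) + r ^ 2 ≠ 0 := by positivity
    have hzr : z = ((2 * a * r / (1 + r ^ 2) : ℝ) : ℂ) := by
      push_cast
      rw [eq_div_iff (by exact_mod_cast hden)]
      rw [ht] at hroot
      push_cast at hroot
      linear_combination hroot
    refine hz (2 * a * r / (1 + r ^ 2)) ?_ hzr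
    constructor
    · rw [le_div_iff₀ (by positivity)]; nlinarith [sq_nonneg (r + 1)]
    · rw [div_le_iff₀ (by positivity)]; nlinarith [sq_nonneg (r - 1)]
  have hrootp : z * tp ^ 2 - 2 * a * tp + z = 0 := by
    rw [htp]; field_simp; linear_combination hv2
  have hrootm : z * tm ^ 2 - 2 * a * tm + z = 0 := by
    rw [htm]; field_simp; linear_combination hv2
  have himp : tp.im ≠ 0 := him tp hrootp
  have himm : tm.im ≠ 0 := him tm hrootm
  have hne1 : ∀ c : ℂ, c.im ≠ 0 → 1 - c ≠ 0 := by
    intro c hc h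
    exact hc (by rw [show c = 1 by linear_combination -h]; simp)
  have hne2 : ∀ c : ℂ, c.im ≠ 0 → -1 - c ≠ 0 := by
    intro c hc h
    exact hc (by rw [show c = -1 by linear_combination -h]; simp)
  set E : ℂ := (Complex.log (1 - tp) - Complex.log (1 - tm)) -
      (Complex.log (-1 - tp) - Complex.log (-1 - tm)) with hE
  have hexp : Complex.exp E = -1 := by
    have e1 : E = (Complex.log (1 - tp) + Complex.log (-1 - tm)) -
        (Complex.log (1 - tm) + Complex.log (-1 - tp)) := by rw [hE]; ring
    rw [e1, Complex.exp_sub, Complex.exp_add, Complex.exp_add,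
      Complex.exp_log (hne1 tp himp), Complex.exp_log (hne2 tm himm),
      Complex.exp_log (hne1 tm himm), Complex.exp_log (hne2 tp himp)]
    rw [show (1 - tp) * (-1 - tm) = -((1 - tm) * (-1 - tp)) by linear_combination 2 * hprod]
    rw [neg_div, div_self (mul_ne_zero (hne1 tm himm) (hne2 tp himp))]
  have hre : E.re = 0 := by
    have h1 := congrArg (fun w : ℂ => ‖w‖) hexp
    rw [Complex.norm_exp] at h1
    simpa using h1
  have hEim : |E.im| < 2 * π := by
    have b1 := sc_arg_aux tp himp
    have b2 := sc_arg_aux tm himm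
    have e2 : E.im = (Complex.arg (1 - tp) - Complex.arg (-1 - tp)) -
        (Complex.arg (1 - tm) - Complex.arg (-1 - tm)) := by
      rw [hE]; simp only [Complex.sub_im, Complex.log_im]; ring
    rw [e2]
    calc |(Complex.arg (1 - tp) - Complex.arg (-1 - tp)) -
        (Complex.arg (1 - tm) - Complex.arg (-1 - tm))|
        ≤ |Complex.arg (1 - tp) - Complex.arg (-1 - tp)| +
          |Complex.arg (1 - tm) - Complex.arg (-1 - tm)| := abs_sub _ _
      _ < 2 * π := by linarith
  have hEy : E = (E.im : ℂ) * Complex.I := by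
    apply Complex.ext <;> simp [hre]
  have hcos : Real.cos E.im = -1 := by
    rw [hEy] at hexp
    have := congrArg Complex.re hexp
    rwa [Complex.exp_ofReal_mul_I_re, show (-1 : ℂ).re = -1 by simp] at this
  have hy2 : E.im ^ 2 = π ^ 2 := by
    have hπ : (0:ℝ) < π := Real.pi_pos
    have hcos1 : Real.cos (E.im + π) = 1 := by rw [Real.cos_add]; simp [hcos]
    obtain ⟨n, hn⟩ := (Real.cos_eq_one_iff _).mp hcos1
    have hyn : E.im = (2 * (n : ℝ) - 1) * π := by push_cast at hn; linarith
    have hb : |2 * (n : ℝ) - 1| < 2 := by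
      rw [hyn, abs_mul, abs_of_pos hπ] at hEim
      exact lt_of_mul_lt_mul_right hEim hπ.le
    have hb2 : (2 * n - 1 = 1) ∨ (2 * n - 1 = -1) := by
      rw [abs_lt] at hb
      have h1 : (-2 : ℝ) < 2 * (n:ℝ) - 1 := hb.1
      have h2 : (2 * (n:ℝ) - 1 : ℝ) < 2 := hb.2
      have h1' : (-2 : ℤ) < 2 * n - 1 := by exact_mod_cast h1
      have h2' : (2 * n - 1 : ℤ) < 2 := by exact_mod_cast h2
      omega
    rcases hb2 with h | h
    · have : (2 * (n:ℝ) - 1) = 1 := by exact_mod_cast h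
      rw [hyn, this]; ring
    · have : (2 * (n:ℝ) - 1) = -1 := by exact_mod_cast h
      rw [hyn, this]; ring
  have hE2 : E ^ 2 = -(π : ℂ) ^ 2 := by
    rw [hEy, mul_pow, Complex.I_sq,
      show ((E.im : ℂ)) ^ 2 = ((π : ℝ) : ℂ) ^ 2 by exact_mod_cast congrArg Complex.ofReal hy2]
    ring
  refine ⟨v, E, hv2, hE2, ?_⟩
  have hle : -a ≤ a := by linarith
  set S : ℝ → ℝ := fun x => Real.sqrt (a ^ 2 - x ^ 2) with hS
  set T : ℝ → ℝ := fun x => x / (a + S x) with hT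
  set f : ℝ → ℂ := fun x => (S x : ℂ) * (z - (x : ℂ))⁻¹ with hf
  set G : ℝ → ℂ := fun x => z * (Real.arcsin (x / a) : ℂ) - (S x : ℂ) +
      v * (Complex.log ((T x : ℂ) - tp) - Complex.log ((T x : ℂ) - tm)) with hG
  have hScont : Continuous S := by
    exact Real.continuous_sqrt.comp (continuous_const.sub (continuous_pow 2))
  have haS : ∀ x, 0 < a + S x := fun x =>
    add_pos_of_pos_of_nonneg ha (Real.sqrt_nonneg _)
  have hTcont : Continuous T :=
    continuous_id.div (continuous_const.add hScont) (fun x => (haS x).ne')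
  have hTslit : ∀ (x : ℝ) (c : ℂ), c.im ≠ 0 → ((T x : ℂ) - c) ∈ Complex.slitPlane := by
    intro x c hc
    rw [Complex.mem_slitPlane_iff]
    right
    simp [hc]
  have hTne : ∀ (x : ℝ) (c : ℂ), c.im ≠ 0 → ((T x : ℂ) - c) ≠ 0 := by
    intro x c hc h
    have := Complex.slitPlane_ne_zero (hTslit x c hc)
    exact this h
  have hzx : ∀ x ∈ Icc (-a) a, z - (x : ℂ) ≠ 0 := fun x hx => sub_ne_zero.mpr (hz x hx)
  have hfc : ContinuousOn f (Icc (-a) a) := by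
    apply ContinuousOn.mul
    · exact (Complex.continuous_ofReal.comp hScont).continuousOn
    · exact ContinuousOn.inv₀
        ((continuous_const.sub Complex.continuous_ofReal).continuousOn) hzx
  have hGc : ContinuousOn G (Icc (-a) a) := by
    apply ContinuousOn.add
    · apply ContinuousOn.sub
      · exact (continuous_const.mul (Complex.continuous_ofReal.comp
          (Real.continuous_arcsin.comp (continuous_id.div_const a)))).continuousOn
      · exact (Complex.continuous_ofReal.comp hScont).continuousOn
    · apply ContinuousOn.mul continuousOn_const
      apply ContinuousOn.sub
      · exact ContinuousOn.clog
          ((Complex.continuous_ofReal.comp hTcont).continuousOn.sub continuousOn_const)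
          (fun x _ => hTslit x tp himp)
      · exact ContinuousOn.clog
          ((Complex.continuous_ofReal.comp hTcont).continuousOn.sub continuousOn_const)
          (fun x _ => hTslit x tm himm)
  have hderiv : ∀ x ∈ Set.Ioo (-a) a, HasDerivAt G (f x) x := by
    intro x hx
    have hpos : 0 < a ^ 2 - x ^ 2 := by nlinarith [hx.1, hx.2]
    have hs0 : 0 < S x := Real.sqrt_pos.mpr hpos
    have hs2 : S x ^ 2 = a ^ 2 - x ^ 2 := Real.sq_sqrt hpos.le
    have has : 0 < a + S x := haS x
    have hzX : z - (x : ℂ) ≠ 0 := hzx x ⟨hx.1.le, hx.2.le⟩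
    -- arcsin component
    have hda : HasDerivAt (fun y : ℝ => Real.arcsin (y / a)) (1 / S x) x := by
      have hinner : HasDerivAt (fun y : ℝ => y / a) (1 / a) x := by
        simpa using (hasDerivAt_id x).div_const a
      have h1 : x / a ≠ -1 := by
        intro h; rw [div_eq_iff ha.ne'] at h; nlinarith
      have h2 : x / a ≠ 1 := by
        intro h; rw [div_eq_iff ha.ne'] at h; nlinarith
      have hcomp := (Real.hasDerivAt_arcsin h1 h2).comp x hinner
      refine hcomp.congr_deriv (Eq.symm ?_)
      rw [show 1 - (x / a) ^ 2 = (a ^ 2 - x ^ 2) / a ^ 2 by field_simp]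
      rw [Real.sqrt_div hpos.le, Real.sqrt_sq ha.le]
      rw [hS]
      field_simp
    -- sqrt component
    have hds : HasDerivAt S (-x / S x) x := by
      have hinner : HasDerivAt (fun y : ℝ => a ^ 2 - y ^ 2) (-(2 * x)) x := by
        simpa using ((hasDerivAt_pow 2 x).const_sub (a ^ 2))
      have hcomp := (Real.hasDerivAt_sqrt hpos.ne').comp x hinner
      refine hcomp.congr_deriv (Eq.symm ?_)
      rw [hS]
      field_simp
    -- T component
    have hdT : HasDerivAt T (a / (S x * (a + S x))) x := by
      have hcomp := (hasDerivAt_id x).div (hds.const_add a) (haS x).ne'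
      refine hcomp.congr_deriv (Eq.symm ?_)
      field_simp
      simp only [id_eq]
      linear_combination -hs2
    -- complex components
    have hdac : HasDerivAt (fun y : ℝ => z * (Real.arcsin (y / a) : ℂ))
        (z * ((1 / S x : ℝ) : ℂ)) x := (hda.ofReal_comp).const_mul z
    have hdsc : HasDerivAt (fun y : ℝ => ((S y : ℝ) : ℂ)) (((-x / S x : ℝ)) : ℂ) x :=
      hds.ofReal_comp
    have hdTc : HasDerivAt (fun y : ℝ => ((T y : ℝ) : ℂ))
        (((a / (S x * (a + S x)) : ℝ)) : ℂ) x := hdT.ofReal_comp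
    have hdlp : HasDerivAt (fun y : ℝ => Complex.log ((T y : ℂ) - tp))
        ((((a / (S x * (a + S x)) : ℝ)) : ℂ) / ((T x : ℂ) - tp)) x :=
      (hdTc.sub_const tp).clog_real (hTslit x tp himp)
    have hdlm : HasDerivAt (fun y : ℝ => Complex.log ((T y : ℂ) - tm))
        ((((a / (S x * (a + S x)) : ℝ)) : ℂ) / ((T x : ℂ) - tm)) x :=
      (hdTc.sub_const tm).clog_real (hTslit x tm himm)
    have hcomb := (hdac.sub hdsc).add ((hdlp.sub hdlm).const_mul v)
    refine hcomb.congr_deriv (Eq.symm ?_)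
    -- algebraic identity for the derivative value
    have hAne : ((T x : ℂ) - tp) ≠ 0 := hTne x tp himp
    have hBne : ((T x : ℂ) - tm) ≠ 0 := hTne x tm himm
    have hsc : ((S x : ℝ) : ℂ) ≠ 0 := by exact_mod_cast hs0.ne'
    have hasc : ((a : ℂ) + (S x : ℂ)) ≠ 0 := by
      have : ((a + S x : ℝ) : ℂ) ≠ 0 := by exact_mod_cast has.ne'
      push_cast at this; exact this
    have hs2c : ((S x : ℝ) : ℂ) ^ 2 = (a : ℂ) ^ 2 - (x : ℂ) ^ 2 := by
      have := congrArg (Complex.ofReal) hs2; push_cast at this; exact this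
    have hTxc : ((T x : ℝ) : ℂ) = (x : ℂ) / ((a : ℂ) + (S x : ℂ)) := by
      rw [hT]; push_cast; ring
    have hAB : ((T x : ℂ) - tp) * ((T x : ℂ) - tm) =
        2 * a * (z - (x : ℂ)) / (z * ((a : ℂ) + (S x : ℂ))) := by
      have e : ((T x : ℂ) - tp) * ((T x : ℂ) - tm) =
          ((T x : ℂ)) ^ 2 - (tp + tm) * (T x : ℂ) + tp * tm := by ring
      rw [e, hsum, hprod, hTxc]
      field_simp
      linear_combination z * hs2c
    have hinv : ((T x : ℂ) - tp)⁻¹ - ((T x : ℂ) - tm)⁻¹ =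
        v * ((a : ℂ) + (S x : ℂ)) / ((a : ℂ) * (z - (x : ℂ))) := by
      rw [inv_sub_inv hAne hBne, hAB,
        show ((T x : ℂ) - tm) - ((T x : ℂ) - tp) = tp - tm by ring, hdiff]
      have hac : (a : ℂ) ≠ 0 := by exact_mod_cast ha.ne'
      field_simp
    rw [hf]
    show (S x : ℂ) * (z - (x : ℂ))⁻¹ = _
    rw [div_eq_mul_inv _ ((T x : ℂ) - tp), div_eq_mul_inv _ ((T x : ℂ) - tm), ← mul_sub,
      hinv]
    have hac : (a : ℂ) ≠ 0 := by exact_mod_cast ha.ne'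
    push_cast
    field_simp
    linear_combination hs2c - hv2
  have hint : IntervalIntegrable f volume (-a) a := by
    apply ContinuousOn.intervalIntegrable
    rwa [uIcc_of_le hle]
  have hFTC := intervalIntegral.integral_eq_sub_of_hasDeriv_right_of_le hle hGc
      (fun x hx => (hderiv x hx).hasDerivWithinAt) hint
  have hgoal : ∫ x in (-a)..a, (Real.sqrt (a ^ 2 - x ^ 2) : ℂ) * (z - (x : ℂ))⁻¹ =
      ∫ x in (-a)..a, f x := by rfl
  rw [hgoal, hFTC]
  have hSa : S a = 0 := by rw [hS]; simp
  have hSma : S (-a) = 0 := by rw [hS]; simp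
  have hTa : T a = 1 := by
    rw [hT]; simp only; rw [hSa, add_zero, div_self ha.ne']
  have hTma : T (-a) = -1 := by
    rw [hT]; simp only; rw [hSma, add_zero, neg_div, div_self ha.ne']
  have harc1 : Real.arcsin (a / a) = π / 2 := by rw [div_self ha.ne', Real.arcsin_one]
  have harcm : Real.arcsin (-a / a) = -(π / 2) := by
    rw [neg_div, div_self ha.ne', Real.arcsin_neg, Real.arcsin_one]
  rw [hG]
  simp only [hSa, hSma, hTa, hTma, harc1, harcm]
  rw [hE]
  push_cast
  ring

/-- The Stieltjes transform `g(z)` of the semicircle law with parameter `σ`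
satisfies the quadratic equation `σ² g(z)² − z g(z) + 1 = 0` for all `z`
outside the support `[-2σ, 2σ]`. -/
theorem semicircle_stieltjes_quadratic (σ : ℝ) (hσ : 0 < σ) (z : ℂ)
    (hz : z ∉ ((↑) '' Icc (-(2 * σ)) (2 * σ) : Set ℂ)) :
    (σ : ℂ) ^ 2 * (∫ x : ℝ, (z - (x : ℂ))⁻¹ ∂(semicircleLaw σ)) ^ 2 -
      z * (∫ x : ℝ, (z - (x : ℂ))⁻¹ ∂(semicircleLaw σ)) + 1 = 0 := by
  have hzx : ∀ x : ℝ, x ∈ Icc (-(2 * σ)) (2 * σ) → z ≠ (x : ℂ) := by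
    intro x hx h
    exact hz ⟨x, hx, h.symm⟩
  set c : ℝ := (2 * π * σ ^ 2)⁻¹ with hc
  have hcpos : 0 < c := by
    rw [hc]; positivity
  -- reduce the measure integral to an interval integral
  have hred : ∫ x : ℝ, (z - (x : ℂ))⁻¹ ∂(semicircleLaw σ) =
      c • ∫ x in (-(2 * σ))..(2 * σ), (Real.sqrt ((2 * σ) ^ 2 - x ^ 2) : ℂ) *
        (z - (x : ℂ))⁻¹ := by
    rw [semicircleLaw]
    have hmeas : Measurable fun x : ℝ => (c * Real.sqrt (4 * σ ^ 2 - x ^ 2)).toNNReal :=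
      ((continuous_const.mul (Real.continuous_sqrt.comp
        (continuous_const.sub (continuous_pow 2)))).measurable).real_toNNReal
    have hofreal : (fun x : ℝ => ENNReal.ofReal (c * Real.sqrt (4 * σ ^ 2 - x ^ 2))) =
        fun x : ℝ => ((c * Real.sqrt (4 * σ ^ 2 - x ^ 2)).toNNReal : ENNReal) := rfl
    rw [hofreal, integral_withDensity_eq_integral_smul hmeas]
    have hps : ∀ x : ℝ, ((c * Real.sqrt (4 * σ ^ 2 - x ^ 2)).toNNReal) • (z - (x:ℂ))⁻¹ =
        c • ((Real.sqrt ((2 * σ) ^ 2 - x ^ 2) : ℂ) * (z - (x:ℂ))⁻¹) := by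
      intro x
      rw [NNReal.smul_def, Real.coe_toNNReal _ (by positivity)]
      rw [show (4 : ℝ) * σ ^ 2 - x ^ 2 = (2 * σ) ^ 2 - x ^ 2 by ring]
      simp [mul_smul, Complex.real_smul]
    simp_rw [hps]
    rw [integral_smul]
    congr 1
    rw [MeasureTheory.integral_Icc_eq_integral_Ioc,
      ← intervalIntegral.integral_of_le (by linarith : -(2*σ) ≤ 2*σ)]
  obtain ⟨v, E, hv2, hE2, hJ⟩ := sc_key (2 * σ) (by linarith) z hzx
  rw [hred, hJ]
  have hπ : (π : ℂ) ≠ 0 := by exact_mod_cast Real.pi_ne_zero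
  have hσc : (σ : ℂ) ≠ 0 := by exact_mod_cast hσ.ne'
  rw [Complex.real_smul, hc]
  push_cast at hv2 ⊢
  field_simp
  linear_combination v ^ 2 * hE2 - (π:ℂ) ^ 2 * hv2
end

section
/- Let u_j = ∑_{k=1}^n w_k/(z_j − x_k) for j = 1, …, m with m ≥ 2n samples z_j that are pairwise distinct and distinct from the x_k. If the x_k are pairwise distinct and the w_k nonzero, then the data (z_j, u_j)_{j=1}^m uniquely determines the multiset {(x_k, w_k)}: any other representation ∑_{k=1}^{n'} w'_k/(z_j − x'_k) = u_j for all j with n' ≤ n, distinct x'_k and nonzero w'_k must coincide with the original. -/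
/-!
Encode a representation as the finitely supported function `∑ k, single (x k) (w k)`. The
difference `c` of two representations is supported on a set `S` of at most `n + n' ≤ 2n ≤ m`
points, and `∑ s ∈ S, c s / (z - s)` vanishes at all `m` samples. Multiplied by
`∏ s ∈ S, (z - s)` it becomes the Lagrange interpolant on `S` of the values `c s / nodalWeight S s`,
a polynomial of degree `< #S ≤ m` with `m` roots. So it is zero, hence `c = 0`, and the two
representations have the same atoms with the same weights.
-/

open Finset Polynomial

theorem Lagrange.eq_zero_of_sum_div_sub_eq_zero {F ι : Type*} [Field F] [DecidableEq ι]
    {s : Finset ι} {v : ι → F} (hvs : Set.InjOn v s) {T : Finset F} (hcard : #s ≤ #T)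
    (hT : ∀ t ∈ T, ∀ i ∈ s, t ≠ v i) (c : ι → F)
    (hc : ∀ t ∈ T, ∑ i ∈ s, c i / (t - v i) = 0) : ∀ i ∈ s, c i = 0 := by
  set r : ι → F := fun i => c i / nodalWeight s v i
  have hinterp : interpolate s v r = 0 := by
    refine eq_zero_of_degree_lt_of_eval_finset_eq_zero T
      ((degree_interpolate_lt r hvs).trans_le (by exact_mod_cast hcard)) fun t ht => ?_
    have hsum : ∑ i ∈ s, nodalWeight s v i * (t - v i)⁻¹ * r i = ∑ i ∈ s, c i / (t - v i) :=
      Finset.sum_congr rfl fun i hi => by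
        have := nodalWeight_ne_zero hvs hi
        simp only [r]
        field_simp
    rw [eval_interpolate_not_at_node r (hT t ht), hsum, hc t ht, mul_zero]
  intro i hi
  have hri : r i = 0 := by rw [← eval_interpolate_at_node r hvs hi, hinterp, eval_zero]
  simpa [r, nodalWeight_ne_zero hvs hi] using hri

namespace Finsupp

theorem eq_zero_of_linearCombination_inv_sub_eq_zero {F : Type*} [Field F] {f : F →₀ F}
    {T : Finset F} (hcard : #f.support ≤ #T) (hT : Disjoint T f.support)
    (hf : ∀ t ∈ T, linearCombination F (fun s => (t - s)⁻¹) f = 0) : f = 0 := by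
  classical
  ext s
  by_contra hs
  refine hs (Lagrange.eq_zero_of_sum_div_sub_eq_zero (Set.injOn_id _) hcard
    (fun t ht i hi => ne_of_mem_of_not_mem ht (Finset.disjoint_right.mp hT hi)) f (fun t ht => ?_)
    s (mem_support_iff.mpr hs))
  simpa [linearCombination_apply, Finsupp.sum, div_eq_mul_inv] using hf t ht

variable {F ι : Type*} [Field F] [Fintype ι]

noncomputable def spikes (a : ι → F) (w : ι → F) : F →₀ F :=
  ∑ k, single (a k) (w k)

theorem spikes_apply {a : ι → F} (ha : Function.Injective a) (w : ι → F) (k : ι) :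
    spikes a w (a k) = w k := by
  classical
  simp [spikes, single_apply, ha.eq_iff]

theorem support_spikes_subset [DecidableEq F] (a : ι → F) (w : ι → F) :
    (spikes a w).support ⊆ univ.image a := by
  refine support_finsetSum.trans fun s hs => ?_
  obtain ⟨k, -, hk⟩ := Finset.mem_biUnion.mp hs
  rw [Finset.mem_singleton.mp (support_single_subset hk)]
  exact Finset.mem_image_of_mem a (mem_univ k)

theorem support_spikes [DecidableEq F] {a : ι → F} (ha : Function.Injective a) {w : ι → F}
    (hw : ∀ k, w k ≠ 0) : (spikes a w).support = univ.image a := by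
  refine (support_spikes_subset a w).antisymm fun s hs => ?_
  obtain ⟨k, -, rfl⟩ := Finset.mem_image.mp hs
  exact mem_support_iff.mpr (spikes_apply ha w k ▸ hw k)

theorem linearCombination_spikes {M : Type*} [AddCommMonoid M] [Module F M] (v : F → M)
    (a : ι → F) (w : ι → F) : linearCombination F v (spikes a w) = ∑ k, w k • v (a k) := by
  simp [spikes, map_sum, linearCombination_single]

theorem spikes_eq_of_sum_div_sub_eq {ι' : Type*} [Fintype ι'] {a w : ι → F} {a' w' : ι' → F}
    {T : Finset F} (hcard : Fintype.card ι + Fintype.card ι' ≤ #T)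
    (hTa : ∀ t ∈ T, ∀ k, t ≠ a k) (hTa' : ∀ t ∈ T, ∀ k, t ≠ a' k)
    (hagree : ∀ t ∈ T, ∑ k, w' k / (t - a' k) = ∑ k, w k / (t - a k)) :
    spikes a' w' = spikes a w := by
  classical
  rw [← sub_eq_zero]
  have hsupp : (spikes a' w' - spikes a w).support ⊆ univ.image a' ∪ univ.image a :=
    support_sub.trans (union_subset_union (support_spikes_subset a' w')
      (support_spikes_subset a w))
  refine eq_zero_of_linearCombination_inv_sub_eq_zero (T := T) ?_ ?_ fun t ht => ?_
  · calc #(spikes a' w' - spikes a w).support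
        ≤ #(univ.image a') + #(univ.image a) := (card_le_card hsupp).trans (card_union_le _ _)
      _ ≤ Fintype.card ι' + Fintype.card ι := add_le_add card_image_le card_image_le
      _ ≤ #T := by omega
  · refine disjoint_left.mpr fun t ht hts => ?_
    rcases mem_union.mp (hsupp hts) with hts | hts <;> obtain ⟨k, -, rfl⟩ := mem_image.mp hts
    exacts [hTa' _ ht k rfl, hTa _ ht k rfl]
  · simp only [map_sub, linearCombination_spikes, smul_eq_mul, ← div_eq_mul_inv,
      hagree t ht, sub_self]

end Finsupp

open Finsupp in
theorem exists_equiv_of_sum_div_sub_eq {F ι ι' : Type*} [Field F] [Fintype ι] [Fintype ι']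
    {a : ι → F} {w : ι → F} (ha : Function.Injective a) (hw : ∀ k, w k ≠ 0)
    {a' : ι' → F} {w' : ι' → F} (ha' : Function.Injective a') (hw' : ∀ k, w' k ≠ 0)
    {T : Finset F} (hcard : Fintype.card ι + Fintype.card ι' ≤ #T)
    (hTa : ∀ t ∈ T, ∀ k, t ≠ a k) (hTa' : ∀ t ∈ T, ∀ k, t ≠ a' k)
    (hagree : ∀ t ∈ T, ∑ k, w' k / (t - a' k) = ∑ k, w k / (t - a k)) :
    ∃ e : ι' ≃ ι, ∀ k, a (e k) = a' k ∧ w (e k) = w' k := by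
  classical
  have hspikes := spikes_eq_of_sum_div_sub_eq hcard hTa hTa' hagree
  have hrange : Set.range a' = Set.range a := by
    have := congrArg Finsupp.support hspikes
    rw [support_spikes ha' hw', support_spikes ha hw] at this
    simpa using congrArg (fun s : Finset F => (s : Set F)) this
  let e : ι' ≃ ι := (Equiv.ofInjective a' ha').trans
    ((Equiv.setCongr hrange).trans (Equiv.ofInjective a ha).symm)
  have hae : ∀ k, a (e k) = a' k := fun k => by simp [e, Equiv.apply_ofInjective_symm]
  exact ⟨e, fun k => ⟨hae k, by rw [← spikes_apply ha w, hae, ← hspikes, spikes_apply ha']⟩⟩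

/-- Uniqueness of sparse representations from `m ≥ 2n` samples.  Let
`u_j = ∑_k w_k/(z_j − x_k)` with distinct real `x_k`, nonzero `w_k`, and
pairwise distinct samples `z_j` avoiding all poles.  Any other representation
`∑_k w'_k/(z_j − x'_k) = u_j` with `n' ≤ n` spikes, distinct `x'_k` and nonzero
`w'_k` must coincide with the original (up to a permutation of indices). -/
theorem sparse_recovery_uniqueness (n n' m : ℕ) (hm : 2 * n ≤ m) (hn' : n' ≤ n)
    (x : Fin n → ℝ) (w : Fin n → ℂ) (hx : Function.Injective x) (hw : ∀ k, w k ≠ 0)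
    (x' : Fin n' → ℝ) (w' : Fin n' → ℂ) (hx' : Function.Injective x') (hw' : ∀ k, w' k ≠ 0)
    (z : Fin m → ℂ) (hz : Function.Injective z)
    (hzx : ∀ j k, z j ≠ (x k : ℂ)) (hzx' : ∀ j k, z j ≠ (x' k : ℂ))
    (hagree : ∀ j, ∑ k, w' k / (z j - (x' k : ℂ)) = ∑ k, w k / (z j - (x k : ℂ))) :
    n' = n ∧ ∃ e : Fin n' ≃ Fin n, ∀ k, x (e k) = x' k ∧ w (e k) = w' k := by
  have hT : #(univ.image z) = m := by rw [card_image_of_injective _ hz, card_fin]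
  obtain ⟨e, he⟩ := exists_equiv_of_sum_div_sub_eq (Complex.ofReal_injective.comp hx) hw
    (Complex.ofReal_injective.comp hx') hw' (T := univ.image z)
    (by simp only [Fintype.card_fin, hT]; omega)
    (by simpa using hzx) (by simpa using hzx') (by simpa using hagree)
  refine ⟨by simpa using Fintype.card_congr e, e, fun k => ⟨?_, (he k).2⟩⟩
  exact Complex.ofReal_injective (he k).1
end
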